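/- Proposition 1: Let 𝒯 be a finite totally ordered set, T₁, T₂ 𝒯-valued random variables with non-degenerate marginal law of T₁, satisfying: (a) for every increasing h : 𝒯 → ℝ, t ↦ E[h(T₂) | T₁ = t] is increasing; (b) φ : 𝒯 → ℝ and ψ : 𝒯 → ℝ are strictly decreasing. Then Cov(φ(T₁), E[ψ(T₂) | T₁]) > 0. -/

import Mathlib

/-!
Writing `p t = P(T₁ = t)` and `r t = E[ψ(T₂) | T₁ = t]`, the covariance is the weighted
Chebyshev sum `½ ∑ₛ ∑ₜ p s p t (φ s - φ t) (r s - r t)`. Hypothesis (a) applied to `-ψ` makes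
`r` strictly decreasing, so every term is nonnegative, and the term for the two atoms `a ≠ b`
of the law of `T₁` is strictly positive.
-/

open MeasureTheory Finset

section WeightedCovariance

variable {ι R : Type*} [Fintype ι]

theorem two_mul_weighted_covariance_eq_sum_sum [CommRing R] (p f g : ι → R)
    (hp : ∑ i, p i = 1) :
    2 * (∑ i, p i * (f i * g i) - (∑ i, p i * f i) * ∑ i, p i * g i)
      = ∑ i, ∑ j, p i * p j * ((f i - f j) * (g i - g j)) := by
  have expand : ∀ i, ∑ j, p i * p j * ((f i - f j) * (g i - g j))
      = p i * (f i * g i) * ∑ j, p j - p i * f i * ∑ j, p j * g j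
        - p i * g i * ∑ j, p j * f j + p i * ∑ j, p j * (f j * g j) := by
    intro i
    simp only [mul_sum, ← sum_sub_distrib, ← sum_add_distrib]
    exact sum_congr rfl fun j _ => by ring
  simp only [expand, sum_add_distrib, sum_sub_distrib, ← sum_mul, hp]
  ring

theorem Monovary.weighted_covariance_pos [CommRing R] [LinearOrder R] [IsStrictOrderedRing R]
    {p f g : ι → R} (hp : ∀ i, 0 ≤ p i) (hp1 : ∑ i, p i = 1) (hfg : Monovary f g)
    {a b : ι} (ha : 0 < p a) (hb : 0 < p b) (hab : 0 < (f a - f b) * (g a - g b)) :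
    0 < ∑ i, p i * (f i * g i) - (∑ i, p i * f i) * ∑ i, p i * g i := by
  have hterm : ∀ i j, 0 ≤ p i * p j * ((f i - f j) * (g i - g j)) := fun i j =>
    mul_nonneg (mul_nonneg (hp i) (hp j)) (hfg.sub_mul_sub_nonneg j i)
  have hsum : 0 < ∑ i, ∑ j, p i * p j * ((f i - f j) * (g i - g j)) :=
    sum_pos' (fun i _ => sum_nonneg fun j _ => hterm i j)
      ⟨a, mem_univ a, sum_pos' (fun j _ => hterm a j)
        ⟨b, mem_univ b, mul_pos (mul_pos ha hb) hab⟩⟩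
  rw [← two_mul_weighted_covariance_eq_sum_sum p f g hp1] at hsum
  exact pos_of_mul_pos_right hsum zero_le_two

end WeightedCovariance

theorem StrictAnti.sub_mul_sub_pos {ι R : Type*} [LinearOrder ι] [Ring R] [LinearOrder R]
    [IsStrictOrderedRing R] {f g : ι → R} (hf : StrictAnti f) (hg : StrictAnti g) {i j : ι}
    (hij : i ≠ j) : 0 < (f i - f j) * (g i - g j) := by
  rcases hij.lt_or_gt with h | h
  · exact mul_pos (sub_pos.2 (hf h)) (sub_pos.2 (hg h))
  · exact mul_pos_of_neg_of_neg (sub_neg.2 (hf h)) (sub_neg.2 (hg h))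

section FiberMean

variable {Ω α : Type*} [MeasurableSpace Ω] (μ : Measure Ω)

/-- The elementary conditional mean `E[X | T = t]`. -/
noncomputable def fiberMean (T : Ω → α) (X : Ω → ℝ) (t : α) : ℝ :=
  (∫ ω in {ω | T ω = t}, X ω ∂μ) / (μ {ω | T ω = t}).toReal

theorem fiberMean_neg (T : Ω → α) (X : Ω → ℝ) : fiberMean μ T (-X) = -fiberMean μ T X := by
  ext t
  simp only [fiberMean, Pi.neg_apply, integral_neg, neg_div]

theorem strictAnti_fiberMean_comp [Preorder α] {T₁ T₂ : Ω → α}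
    (hMES : ∀ h : α → ℝ, StrictMono h → StrictMono (fiberMean μ T₁ (h ∘ T₂)))
    {ψ : α → ℝ} (hψ : StrictAnti ψ) : StrictAnti (fiberMean μ T₁ (ψ ∘ T₂)) := by
  have hneg := hMES (-ψ) fun _ _ h => neg_lt_neg (hψ h)
  rw [show (-ψ) ∘ T₂ = -(ψ ∘ T₂) from rfl, fiberMean_neg] at hneg
  exact fun _ _ h => neg_lt_neg_iff.1 (hneg h)

theorem integral_comp_eq_sum_measureReal [Fintype α] [MeasurableSpace α]
    [MeasurableSingletonClass α] [IsFiniteMeasure μ] {T : Ω → α} (hT : Measurable T)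
    (f : α → ℝ) : ∫ ω, f (T ω) ∂μ = ∑ t, μ.real {ω | T ω = t} * f t := by
  rw [← integral_map hT.aemeasurable (measurable_of_countable f).aestronglyMeasurable,
    integral_fintype .of_finite]
  simp [Measure.real, Measure.map_apply hT (measurableSet_singleton _), Set.preimage]

end FiberMean

theorem cov_pos_affiliated_equilibrium_selection_general
    {Ω α : Type*} [MeasurableSpace Ω] [Fintype α] [LinearOrder α]
    [MeasurableSpace α] [MeasurableSingletonClass α]
    (μ : Measure Ω) [IsProbabilityMeasure μ]
    (T₁ T₂ : Ω → α) (hT₁ : Measurable T₁)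
    (a b : α) (hab : a ≠ b)
    (hpa : 0 < μ {ω | T₁ ω = a}) (hpb : 0 < μ {ω | T₁ ω = b})
    (hMES : ∀ h : α → ℝ, StrictMono h →
      StrictMono (fun t => (∫ ω in {ω | T₁ ω = t}, h (T₂ ω) ∂μ)
                            / (μ {ω | T₁ ω = t}).toReal))
    (φ ψ : α → ℝ) (hφ : StrictAnti φ) (hψ : StrictAnti ψ)
    -- `r t = E[ψ(T₂) | T₁ = t]`, so `r ∘ T₁` is (a version of) `E[ψ(T₂) | T₁]`
    (r : α → ℝ)
    (hr : r = fun t => (∫ ω in {ω | T₁ ω = t}, ψ (T₂ ω) ∂μ)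
                        / (μ {ω | T₁ ω = t}).toReal) :
    0 < (∫ ω, φ (T₁ ω) * r (T₁ ω) ∂μ)
        - (∫ ω, φ (T₁ ω) ∂μ) * (∫ ω, r (T₁ ω) ∂μ) := by
  have hr_anti : StrictAnti r := hr ▸ strictAnti_fiberMean_comp μ hMES hψ
  have hp1 : ∑ t, μ.real {ω | T₁ ω = t} = 1 := by
    simpa using (integral_comp_eq_sum_measureReal μ hT₁ fun _ => (1 : ℝ)).symm
  simp only [integral_comp_eq_sum_measureReal μ hT₁ (fun t => φ t * r t),
    integral_comp_eq_sum_measureReal μ hT₁ φ, integral_comp_eq_sum_measureReal μ hT₁ r]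
  exact (hφ.antitone.monovary hr_anti.antitone).weighted_covariance_pos
    (fun _ => measureReal_nonneg) hp1 (ENNReal.toReal_pos hpa.ne' (measure_ne_top μ _))
    (ENNReal.toReal_pos hpb.ne' (measure_ne_top μ _)) (hφ.sub_mul_sub_pos hr_anti hab)

/-- Proposition 1 (abstract form): with strictly monotone regression dependence
of the equilibrium selections `T₁, T₂` on a finite totally ordered set, strictly
decreasing maps `φ, ψ`, and a non-degenerate law of `T₁`, the covariance of
`φ(T₁)` and `E[ψ(T₂) | T₁]` is strictly positive. -/
theorem cov_pos_affiliated_equilibrium_selection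
    {Ω α : Type*} [MeasurableSpace Ω] [Fintype α] [LinearOrder α]
    [MeasurableSpace α] [MeasurableSingletonClass α]
    (μ : Measure Ω) [IsProbabilityMeasure μ]
    (T₁ T₂ : Ω → α) (hT₁ : Measurable T₁) (hT₂ : Measurable T₂)
    (a b : α) (hab : a ≠ b)
    (hpa : 0 < μ {ω | T₁ ω = a}) (hpb : 0 < μ {ω | T₁ ω = b})
    (hMES : ∀ h : α → ℝ, StrictMono h →
      StrictMono (fun t => (∫ ω in {ω | T₁ ω = t}, h (T₂ ω) ∂μ)
                            / (μ {ω | T₁ ω = t}).toReal))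
    (φ ψ : α → ℝ) (hφ : StrictAnti φ) (hψ : StrictAnti ψ)
    -- `r t = E[ψ(T₂) | T₁ = t]`, so `r ∘ T₁` is (a version of) `E[ψ(T₂) | T₁]`
    (r : α → ℝ)
    (hr : r = fun t => (∫ ω in {ω | T₁ ω = t}, ψ (T₂ ω) ∂μ)
                        / (μ {ω | T₁ ω = t}).toReal) :
    0 < (∫ ω, φ (T₁ ω) * r (T₁ ω) ∂μ)
        - (∫ ω, φ (T₁ ω) ∂μ) * (∫ ω, r (T₁ ω) ∂μ) :=
  cov_pos_affiliated_equilibrium_selection_general μ T₁ T₂ hT₁ a b hab hpa hpb hMES φ ψ hφ hψ r hr
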